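/- For any stationary finite-alphabet source S (not necessarily ergodic) admitting an ergodic decomposition with integrable entropy rates, lim inf_{L→∞} (1/(L−1)) H_m(R_1, ..., R_L) ≥ h_m(S), the Shannon entropy rate of S. -/

import Mathlib

open MeasureTheory ProbabilityTheory Filter Real

/-- Shannon entropy (base 2) of a random variable. -/
noncomputable def shEntropy {Ω : Type*} [MeasurableSpace Ω] {A : Type*}
    (μ : Measure Ω) (X : Ω → A) : ℝ :=
  -∑' a : A, (μ (X ⁻¹' {a})).toReal * Real.logb 2 (μ (X ⁻¹' {a})).toReal

open Classical in
/-- Rank variable `R_n(ω) = #{i : 1 ≤ i ≤ n, S_i(ω) ≤ S_n(ω)}`. -/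
noncomputable def rankVar {Ω A : Type*} [LinearOrder A] (S : ℕ → Ω → A) (n : ℕ) (ω : Ω) : ℕ :=
  ((Finset.Icc 1 n).filter (fun i => S i ω ≤ S n ω)).card

/-- The shift on sequence space. -/
def seqShift {A : Type*} (x : ℕ → A) : ℕ → A := fun n => x (n + 1)

/-- The coordinate process on sequence space, 1-indexed: `S_n(x) = x_{n-1}`. -/
def coordProc {A : Type*} (n : ℕ) (x : ℕ → A) : A := x (n - 1)

/-!
A word of length `L` over `A` is determined by its rank vector together with its letter counts,
and there are at most `(L + 1) ^ |A|` possible letter counts. Hence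
`H(S_1, …, S_L) ≤ H(R_1, …, R_L) + |A| log₂ (L + 1)`, and after dividing by `L - 1` the
logarithmic error term vanishes in the limit.
-/

open Finset Topology

namespace Real

lemma negMulLog_sum_le_sum_negMulLog {ι : Type*} (s : Finset ι) {p : ι → ℝ}
    (hp : ∀ i ∈ s, 0 ≤ p i) : negMulLog (∑ i ∈ s, p i) ≤ ∑ i ∈ s, negMulLog (p i) := by
  rw [negMulLog, neg_mul, sum_mul, ← sum_neg_distrib]
  refine sum_le_sum fun i hi => ?_
  rcases (hp i hi).eq_or_lt with hpi | hpi
  · simp [← hpi]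
  · rw [negMulLog, neg_mul, neg_le_neg_iff]
    gcongr
    exact single_le_sum hp hi

lemma sum_negMulLog_le_negMulLog_sum_add {ι : Type*} (s : Finset ι) {p : ι → ℝ}
    (hp : ∀ i ∈ s, 0 ≤ p i) :
    ∑ i ∈ s, negMulLog (p i) ≤ negMulLog (∑ i ∈ s, p i) + (∑ i ∈ s, p i) * log #s := by
  rcases s.eq_empty_or_nonempty with rfl | hs
  · simp
  have hn : (0 : ℝ) < #s := by exact_mod_cast hs.card_pos
  have jensen := concaveOn_negMulLog.le_map_sum (t := s) (w := fun _ => (#s : ℝ)⁻¹)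
    (fun _ _ => by positivity) (by simp [hn.ne']) hp
  have hinv : negMulLog (#s : ℝ)⁻¹ = (#s : ℝ)⁻¹ * log #s := by
    rw [negMulLog, log_inv]; ring
  simp only [smul_eq_mul, ← mul_sum, negMulLog_mul, hinv] at jensen
  have := mul_le_mul_of_nonneg_left jensen hn.le
  field_simp at this
  linarith

end Real

section Entropy

variable {Ω B C : Type*} [MeasurableSpace Ω] {μ : Measure Ω}

lemma shEntropy_eq_tsum_negMulLog (μ : Measure Ω) (X : Ω → B) :
    shEntropy μ X = (∑' b, negMulLog (μ.real (X ⁻¹' {b}))) / log 2 := by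
  rw [shEntropy, ← tsum_div_const, ← tsum_neg]
  exact tsum_congr fun _ => by rw [negMulLog, logb, measureReal_def]; ring

lemma shEntropy_eq_sum_image_sum_fiber [Fintype B] [DecidableEq C] (μ : Measure Ω) (X : Ω → B)
    (f : B → C) : shEntropy μ X =
      (∑ c ∈ univ.image f, ∑ b with f b = c, negMulLog (μ.real (X ⁻¹' {b}))) / log 2 := by
  rw [shEntropy_eq_tsum_negMulLog, tsum_fintype,
    sum_fiberwise_of_maps_to fun b _ => mem_image_of_mem f (mem_univ b)]

variable [Fintype B] [MeasurableSpace B] [MeasurableSingletonClass B] {X : Ω → B}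

lemma measureReal_comp_preimage_singleton [DecidableEq C] [IsFiniteMeasure μ]
    (hX : Measurable X) (f : B → C) (c : C) :
    μ.real ((f ∘ X) ⁻¹' {c}) = ∑ b with f b = c, μ.real (X ⁻¹' {b}) := by
  rw [sum_measureReal_preimage_singleton _ fun b _ => hX (measurableSet_singleton b)]
  congr 1
  ext ω
  simp

lemma shEntropy_comp_eq_sum_image [DecidableEq C] [IsFiniteMeasure μ] (hX : Measurable X)
    (f : B → C) :
    shEntropy μ (f ∘ X) =
      (∑ c ∈ univ.image f, negMulLog (∑ b with f b = c, μ.real (X ⁻¹' {b}))) / log 2 := by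
  rw [shEntropy_eq_tsum_negMulLog, tsum_eq_sum (s := univ.image f)]
  · simp only [measureReal_comp_preimage_singleton hX]
  · intro c hc
    rw [Set.preimage_comp, Set.preimage_singleton_eq_empty.2 (by simpa using hc)]
    simp

lemma shEntropy_comp_le [IsFiniteMeasure μ] (hX : Measurable X) (f : B → C) :
    shEntropy μ (f ∘ X) ≤ shEntropy μ X := by
  classical
  rw [shEntropy_comp_eq_sum_image hX, shEntropy_eq_sum_image_sum_fiber μ X f]
  gcongr with c
  exact negMulLog_sum_le_sum_negMulLog _ fun _ _ => measureReal_nonneg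

lemma shEntropy_le_shEntropy_comp_add [DecidableEq C] [IsProbabilityMeasure μ]
    (hX : Measurable X) (f : B → C) {K : ℕ} (hK : ∀ c, #{b | f b = c} ≤ K) :
    shEntropy μ X ≤ shEntropy μ (f ∘ X) + logb 2 K := by
  set q : C → ℝ := fun c => ∑ b with f b = c, μ.real (X ⁻¹' {b})
  have hfiber (c : C) (hc : c ∈ univ.image f) :
      ∑ b with f b = c, negMulLog (μ.real (X ⁻¹' {b})) ≤ negMulLog (q c) + q c * log K := by
    refine (sum_negMulLog_le_negMulLog_sum_add _ fun _ _ => measureReal_nonneg).trans ?_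
    obtain ⟨b, -, rfl⟩ := mem_image.1 hc
    gcongr
    · exact_mod_cast card_pos.2 ⟨b, by simp⟩
    · exact_mod_cast hK (f b)
  have htotal : ∑ c ∈ univ.image f, q c = 1 := by
    rw [sum_fiberwise_of_maps_to fun b _ => mem_image_of_mem f (mem_univ b),
      sum_measureReal_preimage_singleton _ fun b _ => hX (measurableSet_singleton b)]
    simp
  rw [shEntropy_comp_eq_sum_image hX, shEntropy_eq_sum_image_sum_fiber μ X f, logb, ← add_div]
  gcongr
  calc _ ≤ ∑ c ∈ univ.image f, (negMulLog (q c) + q c * log K) := sum_le_sum hfiber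
    _ = _ := by rw [sum_add_distrib, ← sum_mul, htotal, one_mul]

lemma shEntropy_le_logb_card [IsProbabilityMeasure μ] (hX : Measurable X) :
    shEntropy μ X ≤ logb 2 (Fintype.card B) := by
  have hconst : shEntropy μ ((fun _ => ()) ∘ X) = 0 := by simp [shEntropy, Function.comp_def]
  have := shEntropy_le_shEntropy_comp_add (μ := μ) hX (fun _ => ()) fun _ => card_le_univ _
  rwa [hconst, zero_add] at this

end Entropy

lemma Multiset.eq_of_countP_le_eq {A : Type*} [LinearOrder A] {M : Multiset A} {a b : A}
    (ha : a ∈ M) (hb : b ∈ M) (h : M.countP (· ≤ a) = M.countP (· ≤ b)) : a = b := by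
  by_contra hne
  wlog hlt : a < b generalizing a b
  · exact this hb ha h.symm (Ne.symm hne) ((Ne.symm hne).lt_of_le (not_lt.1 hlt))
  have hsub : M.filter (· ≤ a) < M.filter (· ≤ b) := by
    refine lt_of_le_of_ne (Multiset.monotone_filter_right M fun x hx => hx.trans hlt.le) ?_
    intro heq
    have hb' : b ∈ M.filter (· ≤ b) := Multiset.mem_filter.2 ⟨hb, le_rfl⟩
    rw [← heq, Multiset.mem_filter] at hb'
    exact hlt.not_ge hb'.2
  have := Multiset.card_lt_card hsub
  rw [← Multiset.countP_eq_card_filter, ← Multiset.countP_eq_card_filter] at this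
  omega

section RankVector

variable {A : Type*} {L : ℕ}

def prefixLetters (w : Fin L → A) (k : ℕ) : Multiset A :=
  (univ.filter fun j : Fin L => (j : ℕ) < k).val.map w

lemma prefixLetters_succ (w : Fin L → A) {k : ℕ} (hk : k < L) :
    prefixLetters w (k + 1) = w ⟨k, hk⟩ ::ₘ prefixLetters w k := by
  have : (univ.filter fun j : Fin L => (j : ℕ) < k + 1) =
      insert ⟨k, hk⟩ (univ.filter fun j : Fin L => (j : ℕ) < k) := by
    ext j
    simp only [mem_filter, mem_univ, true_and, mem_insert, Fin.ext_iff]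
    omega
  rw [prefixLetters, this, insert_val_of_notMem (by simp), Multiset.map_cons]
  rfl

lemma prefixLetters_length (w : Fin L → A) : prefixLetters w L = univ.val.map w := by
  rw [prefixLetters, filter_true_of_mem fun j _ => j.isLt]

variable [LinearOrder A]

def rankVector (w : Fin L → A) (i : Fin L) : ℕ := #{j | j ≤ i ∧ w j ≤ w i}

lemma rankVector_eq_countP (w : Fin L → A) (i : Fin L) :
    rankVector w i = (prefixLetters w (i + 1)).countP (· ≤ w i) := by
  rw [rankVector, prefixLetters, Multiset.countP_map, ← filter_val, card_val, filter_filter]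
  congr 1
  ext j
  simp only [mem_filter, mem_univ, true_and, Fin.le_def, Nat.lt_succ_iff]

lemma eq_of_rankVector_eq_of_prefixLetters_eq {w w' : Fin L → A}
    (hr : rankVector w = rankVector w') {k : ℕ} (hk : k ≤ L)
    (hP : prefixLetters w k = prefixLetters w' k) (i : Fin L) (hi : (i : ℕ) < k) :
    w i = w' i := by
  induction k generalizing i with
  | zero => omega
  | succ k ih =>
    have hkL : k < L := hk
    have hlast : w ⟨k, hkL⟩ = w' ⟨k, hkL⟩ := by
      refine Multiset.eq_of_countP_le_eq (M := prefixLetters w (k + 1)) ?_ ?_ ?_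
      · exact prefixLetters_succ w hkL ▸ Multiset.mem_cons_self _ _
      · exact hP ▸ prefixLetters_succ w' hkL ▸ Multiset.mem_cons_self _ _
      · have h := congrFun hr ⟨k, hkL⟩
        rw [rankVector_eq_countP, rankVector_eq_countP] at h
        exact hP ▸ h
    have hP' : prefixLetters w k = prefixLetters w' k := by
      rwa [prefixLetters_succ w hkL, prefixLetters_succ w' hkL, hlast,
        Multiset.cons_inj_right] at hP
    rcases Nat.lt_succ_iff_lt_or_eq.1 hi with hi | hi
    · exact ih hkL.le hP' i hi
    · obtain rfl : i = ⟨k, hkL⟩ := Fin.ext hi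
      exact hlast

lemma eq_of_rankVector_eq_of_map_eq {w w' : Fin L → A} (hr : rankVector w = rankVector w')
    (hm : univ.val.map w = univ.val.map w') : w = w' :=
  funext fun i => eq_of_rankVector_eq_of_prefixLetters_eq hr le_rfl
    (by rwa [prefixLetters_length, prefixLetters_length]) i i.isLt

lemma card_rankVector_fiber_le [Fintype A] (r : Fin L → ℕ) :
    #{w : Fin L → A | rankVector w = r} ≤ (L + 1) ^ Fintype.card A := by
  let letterCount (w : Fin L → A) (a : A) : Fin (L + 1) :=
    ⟨(univ.val.map w).count a, Nat.lt_succ_of_le ((Multiset.count_le_card _ _).trans (by simp))⟩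
  calc #{w : Fin L → A | rankVector w = r}
      ≤ #(univ : Finset (A → Fin (L + 1))) := by
        refine card_le_card_of_injOn letterCount (fun _ _ => mem_coe.2 (mem_univ _)) ?_
        intro w hw w' hw' hcount
        simp only [coe_filter, mem_univ, true_and, Set.mem_ofPred_eq] at hw hw'
        refine eq_of_rankVector_eq_of_map_eq (hw.trans hw'.symm) (Multiset.ext.2 fun a => ?_)
        exact congrArg Fin.val (congrFun hcount a)
    _ = (L + 1) ^ Fintype.card A := by simp

lemma rankVar_coordProc (x : ℕ → A) (i : Fin L) :
    rankVar coordProc (i + 1) x = rankVector (fun j : Fin L => x j) i := by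
  rw [rankVar, rankVector]
  symm
  refine card_nbij (fun j => (j : ℕ) + 1) ?_ ?_ ?_
  · intro j hj
    simp only [coe_filter, mem_univ, true_and, Fin.le_def, Set.mem_ofPred_eq] at hj
    simp only [coe_filter, mem_Icc, coordProc, Nat.add_sub_cancel, Set.mem_ofPred_eq]
    exact ⟨⟨by omega, by omega⟩, hj.2⟩
  · intro j _ j' _ h
    exact Fin.ext (by simpa using h)
  · intro n hn
    simp only [coe_filter, mem_Icc, coordProc, Nat.add_sub_cancel, Set.mem_ofPred_eq] at hn
    refine ⟨⟨n - 1, by omega⟩, ?_, by simp only; omega⟩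
    simp only [coe_filter, mem_univ, true_and, Set.mem_ofPred_eq, Fin.le_def]
    exact ⟨by omega, hn.2⟩

end RankVector

lemma le_liminf_div_sub_one_of_le_add_mul_log {φ ρ : ℕ → ℝ} {h c C : ℝ}
    (hφ : Tendsto (fun L : ℕ => (1 / (L : ℝ)) * φ L) atTop (𝓝 h))
    (hφρ : ∀ L, φ L ≤ ρ L + c * log (L + 1)) (hρ : ∀ L, ρ L ≤ C * L) :
    h ≤ liminf (fun L : ℕ => (1 / ((L : ℝ) - 1)) * ρ L) atTop := by
  have hratio : Tendsto (fun L : ℕ => (L : ℝ) / (L - 1)) atTop (𝓝 1) := by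
    simpa [sub_eq_add_neg] using tendsto_natCast_div_add_atTop (-1 : ℝ)
  have hlog : Tendsto (fun L : ℕ => log (L + 1) / ((L : ℝ) - 1)) atTop (𝓝 0) := by
    refine ((tendsto_pow_log_div_mul_add_atTop 1 (-2) 1 one_ne_zero).comp
      (tendsto_atTop_add_const_right atTop 1 tendsto_natCast_atTop_atTop)).congr fun L => ?_
    simp only [Function.comp_apply, pow_one, one_mul]
    ring_nf
  have hlower : Tendsto (fun L : ℕ => (L : ℝ) / (L - 1) * ((1 / (L : ℝ)) * φ L) -
      c * (log (L + 1) / ((L : ℝ) - 1))) atTop (𝓝 h) := by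
    simpa using (hratio.mul hφ).sub (hlog.const_mul c)
  have hle : ∀ᶠ L : ℕ in atTop, (L : ℝ) / (L - 1) * ((1 / (L : ℝ)) * φ L) -
      c * (log (L + 1) / ((L : ℝ) - 1)) ≤ (1 / ((L : ℝ) - 1)) * ρ L := by
    filter_upwards [eventually_ge_atTop 2] with L hL
    have hL : (1 : ℝ) < L := by exact_mod_cast hL
    have hL0 : (L : ℝ) ≠ 0 := by positivity
    calc _ = (φ L - c * log (L + 1)) / (L - 1) := by field_simp
      _ ≤ ρ L / (L - 1) := by gcongr; linarith [hφρ L]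
      _ = _ := by ring
  have hbdd : IsBoundedUnder (· ≤ ·) atTop fun L : ℕ => (1 / ((L : ℝ) - 1)) * ρ L := by
    refine (hratio.const_mul C).isBoundedUnder_le.mono_le ?_
    filter_upwards [eventually_ge_atTop 2] with L hL
    have hL : (1 : ℝ) < L := by exact_mod_cast hL
    calc _ = ρ L / (L - 1) := by ring
      _ ≤ C * L / (L - 1) := by gcongr; exact hρ L
      _ = _ := by ring
  calc h = liminf _ atTop := hlower.liminf_eq.symm
    _ ≤ _ := liminf_le_liminf hle hlower.isBoundedUnder_ge hbdd.isCoboundedUnder_ge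

theorem liminf_permutation_entropy_ge_entropy_rate_general {A : Type*}
    [Fintype A] [LinearOrder A] [MeasurableSpace A] [MeasurableSingletonClass A]
    (m : Measure (ℕ → A)) [IsProbabilityMeasure m]
    -- the Shannon entropy rate of the source
    (h : ℝ)
    (hrate : Filter.Tendsto
      (fun L : ℕ => (1 / (L : ℝ)) *
        shEntropy m (fun x => fun i : Fin L => coordProc (i.1 + 1) x))
      Filter.atTop (nhds h)) :
    h ≤ Filter.liminf
      (fun L : ℕ => (1 / ((L : ℝ) - 1)) *
        shEntropy m (fun x => fun i : Fin L => rankVar (coordProc (A := A)) (i.1 + 1) x))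
      Filter.atTop := by
  have hwindow (L : ℕ) : Measurable fun (x : ℕ → A) (j : Fin L) => x j :=
    measurable_pi_lambda _ fun j => measurable_pi_apply _
  have hranks (L : ℕ) : (fun x (i : Fin L) => rankVar (coordProc (A := A)) (i.1 + 1) x) =
      rankVector ∘ fun x (j : Fin L) => x j :=
    funext fun x => funext fun i => rankVar_coordProc x i
  refine le_liminf_div_sub_one_of_le_add_mul_log hrate (c := Fintype.card A / log 2)
    (C := logb 2 (Fintype.card A)) (fun L => ?_) (fun L => ?_) <;> rw [hranks]
  · calc shEntropy m (fun x (j : Fin L) => x j)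
        ≤ shEntropy m (rankVector ∘ fun x (j : Fin L) => x j) +
          logb 2 ((L + 1) ^ Fintype.card A : ℕ) :=
          shEntropy_le_shEntropy_comp_add (hwindow L) _ card_rankVector_fiber_le
      _ = _ := by rw [Nat.cast_pow, logb_pow, logb]; push_cast; ring
  · calc shEntropy m (rankVector ∘ fun x (j : Fin L) => x j)
        ≤ shEntropy m (fun x (j : Fin L) => x j) := shEntropy_comp_le (hwindow L) _
      _ ≤ logb 2 (Fintype.card (Fin L → A)) := shEntropy_le_logb_card (hwindow L)
      _ = _ := by rw [Fintype.card_fun, Fintype.card_fin, Nat.cast_pow, logb_pow, mul_comm]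

/-- For a stationary finite-alphabet source (not necessarily ergodic) admitting an
ergodic decomposition with integrable entropy rates,
`liminf_L (1/(L−1)) H_m(R_1,…,R_L) ≥ h_m(S)`. -/
theorem liminf_permutation_entropy_ge_entropy_rate {A : Type*}
    [Fintype A] [LinearOrder A] [MeasurableSpace A] [MeasurableSingletonClass A]
    (m : Measure (ℕ → A)) [IsProbabilityMeasure m]
    (hinv : MeasurePreserving (seqShift (A := A)) m m)
    -- ergodic decomposition of m into ergodic components m_w over (W, ν)
    (W : Type*) [MeasurableSpace W] (ν : Measure W) [IsProbabilityMeasure ν]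
    (mw : W → Measure (ℕ → A))
    (hprob : ∀ w, IsProbabilityMeasure (mw w))
    (herg : ∀ w, Ergodic (seqShift (A := A)) (mw w))
    (hmix : ∀ C : Set (ℕ → A), MeasurableSet C → m C = ∫⁻ w, mw w C ∂ν)
    -- entropy rates of the components, integrable
    (hw : W → ℝ)
    (hwlim : ∀ w, Filter.Tendsto
      (fun L : ℕ => (1 / (L : ℝ)) *
        shEntropy (mw w) (fun x => fun i : Fin L => coordProc (i.1 + 1) x))
      Filter.atTop (nhds (hw w)))
    (hint : Integrable hw ν)
    -- the Shannon entropy rate of the source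
    (h : ℝ)
    (hrate : Filter.Tendsto
      (fun L : ℕ => (1 / (L : ℝ)) *
        shEntropy m (fun x => fun i : Fin L => coordProc (i.1 + 1) x))
      Filter.atTop (nhds h)) :
    h ≤ Filter.liminf
      (fun L : ℕ => (1 / ((L : ℝ) - 1)) *
        shEntropy m (fun x => fun i : Fin L => rankVar (coordProc (A := A)) (i.1 + 1) x))
      Filter.atTop :=
  liminf_permutation_entropy_ge_entropy_rate_general m h hrate
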